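/- Let δ > 0 and let {f_j : j ∈ J} be a Parseval frame for an N-dimensional Hilbert space H_N with ‖f_j‖² ≤ 1 − δ for all j ∈ J. Let R be a natural number with R ≥ 1/δ. Then J can be partitioned into R sets A₁, …, A_R such that for each r, the family {f_j : j ∉ A_r} spans H_N. -/

import Mathlib

/-!
Naimark duality turns the problem into a Rado–Horn partition problem. The analysis operator
`T x = (⟪f j, x⟫)ⱼ` of a Parseval frame is an isometry `H → ℓ²(J)`, and `g j = eⱼ - T (f j)` is a
Parseval frame of `(range T)ᗮ` with `‖g j‖² = 1 - ‖f j‖² ≥ δ`. A vector `x` orthogonal to all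
`f j`, `j ∉ A`, has `T x` supported on `A`, while `∑ j, (T x) j • g j = 0`; so if `g` is linearly
independent on `A`, then `{f j : j ∉ A}` spans `H`. Expanding in an orthonormal basis of
`span g(S)` gives `δ |S| ≤ ∑_{j ∈ S} ‖g j‖² ≤ dim span g(S)`, hence `|S| ≤ R · dim span g(S)`,
and the Rado–Horn theorem splits `J` into `R` sets on each of which `g` is linearly independent.

Rado–Horn is proved by exchange: take `R` disjoint independent sets of maximal total size, and
suppose `e` is uncovered. Let `Z` collect the elements left uncovered by some family reachable
through exchanges. Each part meets `Z` in a basis of `span g(Z)`, so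
`R · dim span g(Z) ≤ |Z| - 1 < |Z|`, contradicting the hypothesis.
-/

open scoped InnerProductSpace ComplexConjugate
open Module Submodule Function Finset Relation

section LinearIndepOn

variable {ι K M : Type*} [DivisionRing K] [AddCommGroup M] [Module K M] {g : ι → M}

lemma LinearIndepOn.finrank_span_image_eq_card {s : Finset ι}
    (hs : LinearIndepOn K g (s : Set ι)) : finrank K (span K (g '' s)) = s.card := by
  rw [Set.image_eq_range, finrank_span_eq_card hs]
  simp

variable [DecidableEq ι]

lemma LinearIndepOn.mem_span_image_inter {s t : Finset ι} {x : M}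
    (hs : LinearIndepOn K g (s : Set ι)) (hx : x ∈ span K (g '' s))
    (ht : ∀ z ∈ s, z ∉ t → x ∈ span K (g '' ↑(s.erase z))) :
    x ∈ span K (g '' ↑(s ∩ t)) := by
  obtain ⟨l, hl, rfl⟩ := Finsupp.mem_span_image_iff_linearCombination K |>.mp hx
  refine Finsupp.mem_span_image_iff_linearCombination K |>.mpr ⟨l, fun z hz => ?_, rfl⟩
  have hzs : z ∈ s := hl hz
  refine mem_coe.mpr (mem_inter.mpr ⟨hzs, by_contra fun hzt => ?_⟩)
  obtain ⟨l', hl', hll'⟩ := Finsupp.mem_span_image_iff_linearCombination K |>.mp (ht z hzs hzt)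
  have hl's : l' ∈ Finsupp.supported K K (s : Set ι) :=
    Finsupp.supported_mono (coe_subset.mpr (erase_subset z s)) hl'
  have heq : l' = l := linearIndepOn_iffₛ.mp hs l' hl's l hl hll'
  have hz' : z ∉ (l'.support : Set ι) := fun h => by simpa using hl' h
  exact hz' (heq ▸ hz)

lemma span_image_insert_erase_eq {s : Finset ι} {y z : ι} (hz : z ∈ s)
    (hy : g y ∈ span K (g '' s)) (hyz : g y ∉ span K (g '' ↑(s.erase z))) :
    span K (g '' ↑(insert y (s.erase z))) = span K (g '' s) := by
  have hs : g '' s = insert (g z) (g '' ↑(s.erase z)) := by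
    rw [← Set.image_insert_eq, ← coe_insert, insert_erase hz]
  rw [coe_insert, Set.image_insert_eq]
  apply le_antisymm
  · exact span_le.mpr <| Set.insert_subset hy <|
      (Set.image_mono (coe_subset.mpr (erase_subset z s))).trans subset_span
  · rw [hs]
    exact span_le.mpr <| Set.insert_subset (mem_span_insert_exchange (hs ▸ hy) hyz) <|
      (Set.subset_insert _ _).trans subset_span

end LinearIndepOn

section RadoHorn

variable {ι K M : Type*} [DivisionRing K] [AddCommGroup M] [Module K M] {g : ι → M} {R : ℕ}

variable (K) in
def IsPacking (g : ι → M) (F : Fin R → Finset ι) : Prop :=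
  Pairwise (Disjoint on F) ∧ ∀ r, LinearIndepOn K g (F r : Set ι)

variable (K) in
def IsMaxPacking (g : ι → M) (F : Fin R → Finset ι) : Prop :=
  IsPacking K g F ∧ ∀ F' : Fin R → Finset ι, IsPacking K g F' → ∑ r, (F' r).card ≤ ∑ r, (F r).card

lemma sum_card_update_add (F : Fin R → Finset ι) (r : Fin R) (I : Finset ι) :
    ∑ s, (update F r I s).card + (F r).card = ∑ s, (F s).card + I.card := by
  rw [← add_sum_erase _ _ (mem_univ r), ← add_sum_erase _ _ (mem_univ r), update_self,
    sum_congr rfl fun s hs => by rw [update_of_ne (ne_of_mem_erase hs)]]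
  ring

lemma IsPacking.update {F : Fin R → Finset ι} (hF : IsPacking K g F) {r : Fin R}
    {I : Finset ι} (hI : LinearIndepOn K g (I : Set ι)) (hdisj : ∀ s ≠ r, Disjoint I (F s)) :
    IsPacking K g (update F r I) := by
  refine ⟨fun s t hst => ?_, fun s => ?_⟩
  · simp only [onFun]
    rcases eq_or_ne s r with rfl | hs
    · simpa [hst.symm] using hdisj t hst.symm
    · rcases eq_or_ne t r with rfl | ht
      · simpa [hs] using (hdisj s hs).symm
      · simpa [hs, ht] using hF.1 hst
  · rcases eq_or_ne s r with rfl | hs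
    · simpa using hI
    · simpa [hs] using hF.2 s

variable (K g R) in
lemma exists_isMaxPacking [Fintype ι] :
    ∃ F : Fin R → Finset ι, IsMaxPacking K g F := by
  classical
  obtain ⟨F, hF, hmax⟩ := exists_max_image {F : Fin R → Finset ι | IsPacking K g F}
    (fun F => ∑ r, (F r).card)
    ⟨fun _ => ∅, mem_filter.mpr ⟨mem_univ _, fun _ _ _ => disjoint_empty_left _,
      fun _ => by simp⟩⟩
  exact ⟨F, (mem_filter.mp hF).2, fun F' hF' => hmax F' (mem_filter.mpr ⟨mem_univ _, hF'⟩)⟩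

variable [DecidableEq ι]

lemma IsMaxPacking.mem_span_of_forall_notMem {F : Fin R → Finset ι} (hF : IsMaxPacking K g F)
    {y : ι} (hy : ∀ s, y ∉ F s) (r : Fin R) : g y ∈ span K (g '' ↑(F r)) := by
  by_contra h
  have hP : IsPacking K g (update F r (insert y (F r))) :=
    hF.1.update (by simpa using (hF.1.2 r).insert h)
      fun s hs => disjoint_insert_left.mpr ⟨hy s, hF.1.1 hs.symm⟩
  have hsize := sum_card_update_add F r (insert y (F r))
  rw [card_insert_of_notMem (hy r)] at hsize
  have := hF.2 _ hP
  omega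

variable (K g) in
def ExchangeStep (F F' : Fin R → Finset ι) : Prop :=
  ∃ y r z, (∀ s, y ∉ F s) ∧ z ∈ F r ∧ g y ∉ span K (g '' ↑((F r).erase z)) ∧
    F' = update F r (insert y ((F r).erase z))

lemma ExchangeStep.isMaxPacking {F F' : Fin R → Finset ι} (h : ExchangeStep K g F F')
    (hF : IsMaxPacking K g F) : IsMaxPacking K g F' := by
  obtain ⟨y, r, z, hy, hz, hyz, rfl⟩ := h
  have hsize := sum_card_update_add F r (insert y ((F r).erase z))
  rw [card_insert_of_notMem fun h => hy r (mem_of_mem_erase h), card_erase_add_one hz] at hsize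
  refine ⟨hF.1.update ?_ fun s hs => ?_, fun F' hF' => (hF.2 F' hF').trans_eq (by omega)⟩
  · rw [coe_insert]
    exact ((hF.1.2 r).mono (coe_subset.mpr (erase_subset z _))).insert hyz
  · exact disjoint_insert_left.mpr ⟨hy s, (hF.1.1 hs.symm).mono_left (erase_subset z _)⟩

lemma IsMaxPacking.of_reflTransGen {F₀ F : Fin R → Finset ι} (hF₀ : IsMaxPacking K g F₀)
    (h : ReflTransGen (ExchangeStep K g) F₀ F) : IsMaxPacking K g F := by
  induction h with
  | refl => exact hF₀
  | tail _ hstep ih => exact hstep.isMaxPacking ih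

variable [Fintype ι]

open Classical in
variable (K g) in
noncomputable def reachableUncovered (F₀ : Fin R → Finset ι) : Finset ι :=
  {i | ∃ F, ReflTransGen (ExchangeStep K g) F₀ F ∧ ∀ s, i ∉ F s}

variable {F₀ F : Fin R → Finset ι}

lemma mem_reachableUncovered {i : ι} :
    i ∈ reachableUncovered K g F₀ ↔ ∃ F, ReflTransGen (ExchangeStep K g) F₀ F ∧ ∀ s, i ∉ F s := by
  simp [reachableUncovered]

lemma mem_reachableUncovered_of_notMem_span_erase (hF₀ : IsMaxPacking K g F₀)
    (hF : ReflTransGen (ExchangeStep K g) F₀ F) {y z : ι} {r : Fin R} (hy : ∀ s, y ∉ F s)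
    (hz : z ∈ F r) (hyz : g y ∉ span K (g '' ↑((F r).erase z))) :
    z ∈ reachableUncovered K g F₀ := by
  refine mem_reachableUncovered.mpr ⟨_, hF.tail ⟨y, r, z, hy, hz, hyz, rfl⟩, fun s => ?_⟩
  rcases eq_or_ne s r with rfl | hs
  · simpa [update_self] using fun h : z = y => hy s (h ▸ hz)
  · rw [update_of_ne hs]
    exact disjoint_left.mp ((hF₀.of_reflTransGen hF).1.1 hs.symm) hz

lemma mem_span_image_inter_reachableUncovered (hF₀ : IsMaxPacking K g F₀)
    (hF : ReflTransGen (ExchangeStep K g) F₀ F) {y : ι} (hy : ∀ s, y ∉ F s) (r : Fin R) :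
    g y ∈ span K (g '' ↑(F r ∩ reachableUncovered K g F₀)) := by
  have hFmax := hF₀.of_reflTransGen hF
  refine (hFmax.1.2 r).mem_span_image_inter (hFmax.mem_span_of_forall_notMem hy r)
    fun z hz hzZ => ?_
  by_contra hyz
  exact hzZ (mem_reachableUncovered_of_notMem_span_erase hF₀ hF hy hz hyz)

lemma span_image_inter_reachableUncovered_eq (hF₀ : IsMaxPacking K g F₀)
    (hF : ReflTransGen (ExchangeStep K g) F₀ F) (r : Fin R) :
    span K (g '' ↑(F r ∩ reachableUncovered K g F₀)) =
      span K (g '' ↑(F₀ r ∩ reachableUncovered K g F₀)) := by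
  set Z := reachableUncovered K g F₀
  induction hF with
  | refl => rfl
  | @tail F₁ F₂ hF₁ hstep ih =>
    obtain ⟨y, r', z, hy, hz, hyz, rfl⟩ := hstep
    rcases eq_or_ne r r' with rfl | hr
    · -- both `y` and `z` lie in `Z`, so this is also an exchange inside `F₁ r ∩ Z`
      have hyZ : y ∈ Z := mem_reachableUncovered.mpr ⟨F₁, hF₁, hy⟩
      have hzZ : z ∈ Z := mem_reachableUncovered_of_notMem_span_erase hF₀ hF₁ hy hz hyz
      have hinter : insert y ((F₁ r).erase z) ∩ Z = insert y ((F₁ r ∩ Z).erase z) := by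
        ext w
        simp only [mem_inter, mem_insert, mem_erase]
        grind
      rw [update_self, hinter, ← ih]
      refine span_image_insert_erase_eq (mem_inter.mpr ⟨hz, hzZ⟩)
        (mem_span_image_inter_reachableUncovered hF₀ hF₁ hy r) fun h => hyz ?_
      exact span_mono (Set.image_mono (coe_subset.mpr (erase_subset_erase z inter_subset_left))) h
    · rw [update_of_ne hr, ih]

lemma span_image_reachableUncovered_eq (hF₀ : IsMaxPacking K g F₀) (r : Fin R) :
    span K (g '' ↑(reachableUncovered K g F₀)) =
      span K (g '' ↑(F₀ r ∩ reachableUncovered K g F₀)) := by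
  refine le_antisymm (span_le.mpr <| Set.image_subset_iff.mpr fun y hy => ?_)
    (span_mono (Set.image_mono (coe_subset.mpr inter_subset_right)))
  obtain ⟨F, hF, hyF⟩ := mem_reachableUncovered.mp hy
  rw [Set.mem_preimage, ← span_image_inter_reachableUncovered_eq hF₀ hF r]
  exact mem_span_image_inter_reachableUncovered hF₀ hF hyF r

theorem exists_isPacking_cover_of_card_le_mul_finrank
    (hg : ∀ s : Finset ι, s.card ≤ R * finrank K (span K (g '' s))) :
    ∃ F : Fin R → Finset ι, IsPacking K g F ∧ ∀ i, ∃ r, i ∈ F r := by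
  obtain ⟨F₀, hF₀⟩ := exists_isMaxPacking K g R
  refine ⟨F₀, hF₀.1, fun e => ?_⟩
  by_contra! he
  set Z := reachableUncovered K g F₀
  have heZ : e ∈ Z := mem_reachableUncovered.mpr ⟨F₀, .refl, he⟩
  have hcard : ∀ r, (F₀ r ∩ Z).card = finrank K (span K (g '' Z)) := fun r => by
    rw [span_image_reachableUncovered_eq hF₀ r,
      ((hF₀.1.2 r).mono (coe_subset.mpr inter_subset_left)).finrank_span_image_eq_card]
  have hsub : univ.biUnion (fun r => F₀ r ∩ Z) ⊆ Z.erase e := fun w hw => by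
    obtain ⟨r, -, hw⟩ := mem_biUnion.mp hw
    obtain ⟨hwr, hwZ⟩ := mem_inter.mp hw
    exact mem_erase.mpr ⟨fun h => he r (h ▸ hwr), hwZ⟩
  have hdisj : ((univ : Finset (Fin R)) : Set (Fin R)).PairwiseDisjoint fun r => F₀ r ∩ Z :=
    fun r _ s _ hrs => (hF₀.1.1 hrs).mono inter_subset_left inter_subset_left
  have hle := card_le_card hsub
  rw [card_biUnion hdisj, sum_congr rfl fun r _ => hcard r, sum_const, card_univ,
    Fintype.card_fin, smul_eq_mul, card_erase_of_mem heZ] at hle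
  have := hg Z
  have := card_pos.mpr ⟨e, heZ⟩
  omega

end RadoHorn

section FrameRank

variable {𝕜 : Type*} [RCLike 𝕜] {E : Type*} [NormedAddCommGroup E] [InnerProductSpace 𝕜 E]
  {ι : Type*}

lemma sum_norm_sq_le_finrank_span (g : ι → E) (s : Finset ι)
    (hg : ∀ u ∈ span 𝕜 (g '' s), ∑ j ∈ s, ‖⟪u, g j⟫_𝕜‖ ^ 2 ≤ ‖u‖ ^ 2) :
    ∑ j ∈ s, ‖g j‖ ^ 2 ≤ finrank 𝕜 (span 𝕜 (g '' s)) := by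
  set V := span 𝕜 (g '' s)
  have : FiniteDimensional 𝕜 V := FiniteDimensional.span_of_finite 𝕜 (s.finite_toSet.image g)
  let b := stdOrthonormalBasis 𝕜 V
  have hgV : ∀ j ∈ s, g j ∈ V := fun j hj => subset_span ⟨j, hj, rfl⟩
  calc ∑ j ∈ s, ‖g j‖ ^ 2 = ∑ j ∈ s, ∑ i, ‖⟪(b i : E), g j⟫_𝕜‖ ^ 2 := by
        refine Finset.sum_congr rfl fun j hj => ?_
        exact (b.sum_sq_norm_inner_right ⟨g j, hgV j hj⟩).symm
    _ = ∑ i, ∑ j ∈ s, ‖⟪(b i : E), g j⟫_𝕜‖ ^ 2 := Finset.sum_comm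
    _ ≤ ∑ i, ‖(b i : E)‖ ^ 2 := Finset.sum_le_sum fun i _ => hg _ (b i).2
    _ = ∑ _i : Fin (finrank 𝕜 V), (1 : ℝ) := by
        refine Finset.sum_congr rfl fun i _ => ?_
        rw [show ‖(b i : E)‖ = 1 from b.orthonormal.1 i, one_pow]
    _ = finrank 𝕜 V := by simp

end FrameRank

section NaimarkComplement

variable {𝕜 : Type*} [RCLike 𝕜] {H : Type*} [NormedAddCommGroup H] [InnerProductSpace 𝕜 H]
  {J : Type*}

variable (𝕜) in
def analysisOp (f : J → H) : H →ₗ[𝕜] EuclideanSpace 𝕜 J where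
  toFun x := WithLp.toLp 2 fun j => ⟪f j, x⟫_𝕜
  map_add' x y := by ext j; simp [inner_add_right]
  map_smul' a x := by ext j; simp [inner_smul_right]

@[simp]
lemma analysisOp_apply (f : J → H) (x : H) (j : J) : analysisOp 𝕜 f x j = ⟪f j, x⟫_𝕜 := rfl

variable [Fintype J]

variable (𝕜) in
def IsParsevalFrame (f : J → H) : Prop :=
  ∀ x, ∑ j, ‖⟪x, f j⟫_𝕜‖ ^ 2 = ‖x‖ ^ 2

variable {f : J → H}

lemma IsParsevalFrame.norm_analysisOp (hf : IsParsevalFrame 𝕜 f) (x : H) :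
    ‖analysisOp 𝕜 f x‖ = ‖x‖ := by
  rw [← sq_eq_sq₀ (norm_nonneg _) (norm_nonneg _), PiLp.norm_sq_eq_of_L2, ← hf x]
  simp [norm_inner_symm]

lemma IsParsevalFrame.inner_analysisOp (hf : IsParsevalFrame 𝕜 f) (x y : H) :
    ⟪analysisOp 𝕜 f x, analysisOp 𝕜 f y⟫_𝕜 = ⟪x, y⟫_𝕜 :=
  (⟨analysisOp 𝕜 f, hf.norm_analysisOp⟩ : H →ₗᵢ[𝕜] EuclideanSpace 𝕜 J).inner_map_map x y

variable [DecidableEq J]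

variable (𝕜) in
def naimarkComplement (f : J → H) (j : J) : EuclideanSpace 𝕜 J :=
  EuclideanSpace.single j 1 - analysisOp 𝕜 f (f j)

lemma IsParsevalFrame.naimarkComplement_mem_orthogonal (hf : IsParsevalFrame 𝕜 f) (j : J) :
    naimarkComplement 𝕜 f j ∈ (LinearMap.range (analysisOp 𝕜 f))ᗮ := by
  rw [mem_orthogonal]
  rintro - ⟨x, rfl⟩
  rw [naimarkComplement, inner_sub_right, hf.inner_analysisOp, EuclideanSpace.inner_single_right,
    analysisOp_apply, inner_conj_symm, one_mul, sub_self]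

lemma inner_naimarkComplement_of_mem_orthogonal {u : EuclideanSpace 𝕜 J}
    (hu : u ∈ (LinearMap.range (analysisOp 𝕜 f))ᗮ) (j : J) :
    ⟪u, naimarkComplement 𝕜 f j⟫_𝕜 = conj (u j) := by
  rw [naimarkComplement, inner_sub_right, EuclideanSpace.inner_single_right,
    inner_left_of_mem_orthogonal (LinearMap.mem_range_self _ _) hu, one_mul, sub_zero]

lemma sum_norm_inner_naimarkComplement_sq {u : EuclideanSpace 𝕜 J}
    (hu : u ∈ (LinearMap.range (analysisOp 𝕜 f))ᗮ) :
    ∑ j, ‖⟪u, naimarkComplement 𝕜 f j⟫_𝕜‖ ^ 2 = ‖u‖ ^ 2 := by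
  simp [inner_naimarkComplement_of_mem_orthogonal hu, PiLp.norm_sq_eq_of_L2]

lemma IsParsevalFrame.norm_naimarkComplement_sq (hf : IsParsevalFrame 𝕜 f) (j : J) :
    ‖naimarkComplement 𝕜 f j‖ ^ 2 = 1 - ‖f j‖ ^ 2 := by
  have horth : ⟪analysisOp 𝕜 f (f j), naimarkComplement 𝕜 f j⟫_𝕜 = 0 :=
    inner_right_of_mem_orthogonal (LinearMap.mem_range_self _ _)
      (hf.naimarkComplement_mem_orthogonal j)
  have h := norm_add_sq_eq_norm_sq_add_norm_sq_of_inner_eq_zero _ _ horth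
  rw [naimarkComplement, add_sub_cancel, PiLp.norm_single, norm_one, hf.norm_analysisOp] at h
  rw [sq, sq, naimarkComplement]
  linarith

lemma IsParsevalFrame.sum_analysisOp_smul_naimarkComplement (hf : IsParsevalFrame 𝕜 f) (x : H) :
    ∑ j, analysisOp 𝕜 f x j • naimarkComplement 𝕜 f j = 0 := by
  set W := LinearMap.range (analysisOp 𝕜 f)
  set v := ∑ j, analysisOp 𝕜 f x j • naimarkComplement 𝕜 f j
  have hv : v ∈ Wᗮ := sum_mem fun j _ => smul_mem _ _ (hf.naimarkComplement_mem_orthogonal j)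
  suffices ⟪v, v⟫_𝕜 = 0 from inner_self_eq_zero.mp this
  calc ⟪v, v⟫_𝕜 = ∑ j, analysisOp 𝕜 f x j * conj (v j) := by
        simp only [v, inner_sum, inner_smul_right, inner_naimarkComplement_of_mem_orthogonal hv]
    _ = ⟪v, analysisOp 𝕜 f x⟫_𝕜 := by simp [PiLp.inner_apply]
    _ = 0 := inner_left_of_mem_orthogonal (LinearMap.mem_range_self _ _) hv

lemma IsParsevalFrame.span_image_compl_eq_top (hf : IsParsevalFrame 𝕜 f) {A : Finset J}
    (hA : LinearIndepOn 𝕜 (naimarkComplement 𝕜 f) A) : span 𝕜 (f '' (A : Set J)ᶜ) = ⊤ := by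
  have : FiniteDimensional 𝕜 (span 𝕜 (f '' (A : Set J)ᶜ)) :=
    FiniteDimensional.span_of_finite 𝕜 (Set.toFinite _)
  rw [← orthogonal_eq_bot_iff, eq_bot_iff]
  intro x hx
  have hout : ∀ j ∉ A, analysisOp 𝕜 f x j = 0 := fun j hj =>
    inner_right_of_mem_orthogonal
      (subset_span (Set.mem_image_of_mem f (show j ∈ (A : Set J)ᶜ from hj))) hx
  have hin : ∀ j ∈ A, analysisOp 𝕜 f x j = 0 := by
    refine linearIndepOn_finset_iff.mp hA _ ?_
    rw [Finset.sum_subset (Finset.subset_univ A) fun j _ hj => by rw [hout j hj, zero_smul]]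
    exact hf.sum_analysisOp_smul_naimarkComplement x
  have hTx : analysisOp 𝕜 f x = 0 := by
    ext j
    by_cases hj : j ∈ A
    · exact hin j hj
    · exact hout j hj
  rw [mem_bot, ← norm_eq_zero, ← hf.norm_analysisOp, hTx, norm_zero]

lemma IsParsevalFrame.card_le_mul_finrank_span_naimarkComplement (hf : IsParsevalFrame 𝕜 f)
    {δ : ℝ} (hnorm : ∀ j, ‖f j‖ ^ 2 ≤ 1 - δ) {R : ℕ} (hR : 1 ≤ δ * R) (s : Finset J) :
    s.card ≤ R * finrank 𝕜 (span 𝕜 (naimarkComplement 𝕜 f '' s)) := by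
  have hspan : span 𝕜 (naimarkComplement 𝕜 f '' s) ≤ (LinearMap.range (analysisOp 𝕜 f))ᗮ :=
    span_le.mpr <| Set.image_subset_iff.mpr fun j _ => hf.naimarkComplement_mem_orthogonal j
  have hδ : s.card * δ ≤ finrank 𝕜 (span 𝕜 (naimarkComplement 𝕜 f '' s)) :=
    calc s.card * δ = ∑ _j ∈ s, δ := by rw [Finset.sum_const, nsmul_eq_mul]
      _ ≤ ∑ j ∈ s, ‖naimarkComplement 𝕜 f j‖ ^ 2 := Finset.sum_le_sum fun j _ => by
          rw [hf.norm_naimarkComplement_sq]; linarith [hnorm j]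
      _ ≤ _ := sum_norm_sq_le_finrank_span _ s fun u hu => by
          rw [← sum_norm_inner_naimarkComplement_sq (hspan hu)]
          exact Finset.sum_le_sum_of_subset_of_nonneg (Finset.subset_univ s)
            fun j _ _ => sq_nonneg _
  have : (s.card : ℝ) ≤ R * finrank 𝕜 (span 𝕜 (naimarkComplement 𝕜 f '' s)) := by
    nlinarith [mul_le_mul_of_nonneg_left hR (Nat.cast_nonneg (α := ℝ) s.card),
      mul_le_mul_of_nonneg_right hδ (Nat.cast_nonneg (α := ℝ) R)]
  exact_mod_cast this

end NaimarkComplement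

theorem parseval_partition_cospanning_general
    {H : Type*} [NormedAddCommGroup H] [InnerProductSpace ℂ H]
    {J : Type*} [Fintype J] (δ : ℝ) (hδ : 0 < δ) (f : J → H)
    (hParseval : ∀ x : H, ∑ j : J, ‖⟪x, f j⟫_ℂ‖ ^ 2 = ‖x‖ ^ 2)
    (hnorm : ∀ j : J, ‖f j‖ ^ 2 ≤ 1 - δ)
    (R : ℕ) (hR : 1 / δ ≤ (R : ℝ)) :
    ∃ A : Fin R → Set J,
      (⋃ r, A r) = Set.univ ∧ Pairwise (Function.onFun Disjoint A) ∧
      ∀ r, Submodule.span ℂ (f '' (A r)ᶜ) = ⊤ := by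
  classical
  have hf : IsParsevalFrame ℂ f := hParseval
  have hδR : 1 ≤ δ * R := by
    rw [div_le_iff₀ hδ] at hR
    linarith
  obtain ⟨A, hA, hcover⟩ := exists_isPacking_cover_of_card_le_mul_finrank
    (hf.card_le_mul_finrank_span_naimarkComplement hnorm hδR)
  refine ⟨fun r => A r, ?_, fun r s hrs => disjoint_coe.mpr (hA.1 hrs),
    fun r => hf.span_image_compl_eq_top (hA.2 r)⟩
  ext i
  simpa using hcover i

/-- If `{f j : j ∈ J}` is a Parseval frame for a finite-dimensional
Hilbert space with `‖f j‖² ≤ 1 - δ` for all `j`, and `R ≥ 1/δ` is a natural number,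
then `J` can be partitioned into `R` sets each of whose complements spans. -/
theorem parseval_partition_cospanning
    {H : Type*} [NormedAddCommGroup H] [InnerProductSpace ℂ H] [FiniteDimensional ℂ H]
    {J : Type*} [Fintype J] (δ : ℝ) (hδ : 0 < δ) (f : J → H)
    (hParseval : ∀ x : H, ∑ j : J, ‖⟪x, f j⟫_ℂ‖ ^ 2 = ‖x‖ ^ 2)
    (hnorm : ∀ j : J, ‖f j‖ ^ 2 ≤ 1 - δ)
    (R : ℕ) (hR : 1 / δ ≤ (R : ℝ)) :
    ∃ A : Fin R → Set J,
      (⋃ r, A r) = Set.univ ∧ Pairwise (Function.onFun Disjoint A) ∧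
      ∀ r, Submodule.span ℂ (f '' (A r)ᶜ) = ⊤ :=
  parseval_partition_cospanning_general δ hδ f hParseval hnorm R hR
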